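/- Let M and M' be maximum matchings in a bipartite graph G with parts A, B. Then V^+(M') = V^+(M) and V^-(M') = V^-(M), where V^+(M) is the set of vertices reachable in D(M) by a directed path from some vertex of A uncovered by M, and V^-(M) is the set of vertices from which some vertex of B uncovered by M is reachable by a directed path in D(M). -/

import Mathlib

/-!
For a maximum matching `M`, a vertex `a ∈ A` lies in `V⁺(M)` iff some maximum matching misses `a`:
exchanging matching edges along an alternating path from a free vertex frees its endpoint, and
conversely a maximum matching `N` missing `a` can be walked back to `M` one exchange at a time,
tracing an alternating path that ends at `a`. A vertex `b ∈ B` lies in `V⁺(M)` iff it has a neighbour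
in `V⁺(M) ∩ A`. Neither description depends on `M`, and `V⁻` is `V⁺` with `A` and `B` swapped.
-/

variable {V : Type*}

/-- `M` is a matching in `G`: a set of edges of `G` that are pairwise disjoint. -/
def IsMatchingSet (G : SimpleGraph V) (M : Set (Sym2 V)) : Prop :=
  M ⊆ G.edgeSet ∧ ∀ e ∈ M, ∀ f ∈ M, e ≠ f → ∀ v : V, v ∈ e → v ∉ f

/-- `V(M)`: the set of vertices covered by the matching `M`. -/
def matVerts (M : Set (Sym2 V)) : Set V := {v | ∃ e ∈ M, v ∈ e}

/-- `M` is a maximum matching in `G`. -/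
def IsMaximumMatching (G : SimpleGraph V) (M : Set (Sym2 V)) : Prop :=
  IsMatchingSet G M ∧ ∀ M', IsMatchingSet G M' → M'.ncard ≤ M.ncard

/-- `M` is uniquely restricted: no matching distinct from `M` covers the same vertices. -/
def UniquelyRestricted (G : SimpleGraph V) (M : Set (Sym2 V)) : Prop :=
  ∀ M', IsMatchingSet G M' → matVerts M' = matVerts M → M' = M

/-- `M` is a perfect matching of `G`. -/
def IsPerfectMatchingSet (G : SimpleGraph V) (M : Set (Sym2 V)) : Prop :=
  IsMatchingSet G M ∧ matVerts M = Set.univ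

/-- `A, B` form a bipartition of `G`. -/
def IsBipartition (G : SimpleGraph V) (A B : Set V) : Prop :=
  Disjoint A B ∧ A ∪ B = Set.univ ∧
    ∀ ⦃u v : V⦄, G.Adj u v → (u ∈ A ∧ v ∈ B) ∨ (u ∈ B ∧ v ∈ A)

/-- `I` is an independent set in `G`. -/
def IsIndepSet (G : SimpleGraph V) (I : Set V) : Prop :=
  ∀ u ∈ I, ∀ v ∈ I, ¬ G.Adj u v

/-- `I` is a maximum independent set in `G`. -/
def IsMaximumIndepSet (G : SimpleGraph V) (I : Set V) : Prop :=
  IsIndepSet G I ∧ ∀ J, IsIndepSet G J → J.ncard ≤ I.ncard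

/-- The arcs of the digraph `D(M)`: edges not in `M` oriented from `A` to `B`,
edges of `M` oriented from `B` to `A`. -/
def DMarc (G : SimpleGraph V) (A B : Set V) (M : Set (Sym2 V)) (u v : V) : Prop :=
  G.Adj u v ∧ ((u ∈ A ∧ v ∈ B ∧ s(u, v) ∉ M) ∨ (u ∈ B ∧ v ∈ A ∧ s(u, v) ∈ M))

/-- The digraph `D(M)` is acyclic. -/
def DMAcyclic (G : SimpleGraph V) (A B : Set V) (M : Set (Sym2 V)) : Prop :=
  ∀ v : V, ¬ Relation.TransGen (DMarc G A B M) v v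

/-- `V⁺(M)`: vertices reachable in `D(M)` from an `A`-vertex uncovered by `M`. -/
def Vplus (G : SimpleGraph V) (A B : Set V) (M : Set (Sym2 V)) : Set V :=
  {v | ∃ a ∈ A, a ∉ matVerts M ∧ Relation.ReflTransGen (DMarc G A B M) a v}

/-- `V⁻(M)`: vertices from which a `B`-vertex uncovered by `M` is reachable in `D(M)`. -/
def Vminus (G : SimpleGraph V) (A B : Set V) (M : Set (Sym2 V)) : Set V :=
  {v | ∃ b ∈ B, b ∉ matVerts M ∧ Relation.ReflTransGen (DMarc G A B M) v b}

/-- Given a linear ordering `l` of an independent set, `Mσ G l` is the set of edges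
`y·p(y)` where `p(y)` is the first vertex of `l` adjacent to `y`. -/
def Msigma (G : SimpleGraph V) (l : List V) : Set (Sym2 V) :=
  {e | ∃ (i : Fin l.length) (y : V), e = s(y, l.get i) ∧ G.Adj (l.get i) y ∧
      ∀ j : Fin l.length, (j : ℕ) < (i : ℕ) → ¬ G.Adj (l.get j) y}

/-- `l` is an accessibility ordering of `I`: it enumerates `I` without repetition
and `Mσ` is a matching. -/
def IsAccessibilityOrdering (G : SimpleGraph V) (I : Set V) (l : List V) : Prop :=
  l.Nodup ∧ {v | v ∈ l} = I ∧ IsMatchingSet G (Msigma G l)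

/-- A partial accessibility ordering: an accessibility ordering of a subset of `I`. -/
def IsPartialAccessibilityOrdering (G : SimpleGraph V) (I : Set V) (l : List V) : Prop :=
  l.Nodup ∧ {v | v ∈ l} ⊆ I ∧ IsMatchingSet G (Msigma G l)

/-- `c` is an `M`-alternating cycle: of every two adjacent edges exactly one is in `M`. -/
def IsAlternatingCycle (G : SimpleGraph V) (M : Set (Sym2 V)) {v : V} (c : G.Walk v v) : Prop :=
  c.IsCycle ∧ (c.edges ++ c.edges.take 1).Chain' (fun e f => e ∈ M ↔ f ∉ M)

/-- `M'` arises from `M` by a single edge exchange. -/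
def EdgeExchange (G : SimpleGraph V) (A B : Set V) (M M' : Set (Sym2 V)) : Prop :=
  (∃ a a' b' : V, a ∈ A ∧ a ∉ matVerts M ∧ s(a', b') ∈ M ∧ G.Adj a b' ∧
      M' = (M \ {s(a', b')}) ∪ {s(a, b')}) ∨
  (∃ b a' b' : V, b ∈ B ∧ b ∉ matVerts M ∧ s(a', b') ∈ M ∧ G.Adj a' b ∧
      M' = (M \ {s(a', b')}) ∪ {s(a', b)})

def IsInessential (G : SimpleGraph V) (v : V) : Prop :=
  ∃ N, IsMaximumMatching G N ∧ v ∉ matVerts N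

section

variable {G : SimpleGraph V} {A B : Set V} {M N : Set (Sym2 V)} {a a' b u v : V}

lemma IsBipartition.symm (hbip : IsBipartition G A B) : IsBipartition G B A :=
  ⟨hbip.1.symm, Set.union_comm A B ▸ hbip.2.1, fun _ _ h => (hbip.2.2 h).symm⟩

lemma IsBipartition.mem_B_of_adj (hbip : IsBipartition G A B) (ha : a ∈ A) (hab : G.Adj a b) :
    b ∈ B :=
  (hbip.2.2 hab).elim And.right fun h => absurd h.1 (Set.disjoint_left.1 hbip.1 ha)

lemma mem_matVerts_insert {e : Sym2 V} : v ∈ matVerts (insert e N) ↔ v ∈ e ∨ v ∈ matVerts N := by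
  simp [matVerts]

lemma matVerts_mono (h : M ⊆ N) : matVerts M ⊆ matVerts N :=
  fun _ ⟨e, he, hv⟩ => ⟨e, h he, hv⟩

lemma IsMatchingSet.mono (hN : IsMatchingSet G N) (h : M ⊆ N) : IsMatchingSet G M :=
  ⟨h.trans hN.1, fun e he f hf => hN.2 e (h he) f (h hf)⟩

lemma IsMatchingSet.eq_of_mem {e f : Sym2 V} (hN : IsMatchingSet G N) (he : e ∈ N) (hf : f ∈ N)
    (hve : v ∈ e) (hvf : v ∈ f) : e = f :=
  by_contra fun hne => hN.2 e he f hf hne v hve hvf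

lemma IsMatchingSet.notMem_matVerts_sdiff {e : Sym2 V} (hN : IsMatchingSet G N) (he : e ∈ N)
    (hv : v ∈ e) : v ∉ matVerts (N \ {e}) :=
  fun ⟨_, ⟨hf, hfe⟩, hvf⟩ => hfe (hN.eq_of_mem hf he hvf hv)

lemma IsMatchingSet.insert (hN : IsMatchingSet G N) (hab : G.Adj a b) (ha : a ∉ matVerts N)
    (hb : b ∉ matVerts N) : IsMatchingSet G (insert s(a, b) N) := by
  refine ⟨Set.insert_subset (G.mem_edgeSet.2 hab) hN.1, ?_⟩
  have hfree : ∀ f ∈ N, ∀ w ∈ s(a, b), w ∉ f := by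
    intro f hf w hw hwf
    rcases Sym2.mem_iff.1 hw with rfl | rfl
    exacts [ha ⟨f, hf, hwf⟩, hb ⟨f, hf, hwf⟩]
  rintro e (rfl | he) f (rfl | hf) hne w hwe hwf
  · exact hne rfl
  · exact hfree f hf w hwe hwf
  · exact hfree e he w hwf hwe
  · exact hN.2 e he f hf hne w hwe hwf

lemma IsMaximumMatching.mem_matVerts_of_adj [Finite V] (hN : IsMaximumMatching G N)
    (hab : G.Adj a b) (ha : a ∉ matVerts N) : b ∈ matVerts N := by
  by_contra hb
  have hle := hN.2 _ (hN.1.insert hab ha hb)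
  rw [Set.ncard_insert_of_notMem fun h => ha ⟨_, h, Sym2.mem_mk_left a b⟩] at hle
  omega

lemma IsMaximumMatching.exchange [Finite V] (hN : IsMaximumMatching G N) (hab : G.Adj a b)
    (ha : a ∉ matVerts N) (hb : s(a', b) ∈ N) :
    IsMaximumMatching G (insert s(a, b) (N \ {s(a', b)})) ∧
      a' ∉ matVerts (insert s(a, b) (N \ {s(a', b)})) := by
  have hsub : N \ {s(a', b)} ⊆ N := Set.sdiff_subset
  have haN' : a ∉ matVerts (N \ {s(a', b)}) := fun h => ha (matVerts_mono hsub h)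
  have hbN' := hN.1.notMem_matVerts_sdiff hb (Sym2.mem_mk_right a' b)
  have hab' : s(a, b) ∉ N \ {s(a', b)} := fun h => haN' ⟨_, h, Sym2.mem_mk_left a b⟩
  refine ⟨⟨(hN.1.mono hsub).insert hab haN' hbN', fun M hM => ?_⟩, ?_⟩
  · rw [Set.ncard_insert_of_notMem hab', Set.ncard_sdiff_singleton_add_one hb]
    exact hN.2 M hM
  · rw [mem_matVerts_insert, not_or]
    refine ⟨fun h => ?_, hN.1.notMem_matVerts_sdiff hb (Sym2.mem_mk_left a' b)⟩
    rcases Sym2.mem_iff.1 h with rfl | rfl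
    · exact ha ⟨_, hb, Sym2.mem_mk_left _ b⟩
    · exact (G.mem_edgeSet.1 (hN.1.1 hb)).ne rfl

lemma mem_exchange_iff {M : Set (Sym2 V)} (hu : u ≠ b) (hv : v ≠ b) :
    s(u, v) ∈ insert s(a, b) (M \ {s(a', b)}) ↔ s(u, v) ∈ M := by
  simp [hu, hv]

lemma DMarc.out_of_A (hAB : Disjoint A B) (h : DMarc G A B M u v) (hu : u ∈ A) :
    v ∈ B ∧ s(u, v) ∉ M :=
  h.2.elim (fun h => h.2) fun h => absurd h.1 (Set.disjoint_left.1 hAB hu)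

lemma DMarc.out_of_B (hAB : Disjoint A B) (h : DMarc G A B M u v) (hu : u ∈ B) :
    v ∈ A ∧ s(u, v) ∈ M :=
  h.2.elim (fun h => absurd hu (Set.disjoint_left.1 hAB h.1)) fun h => h.2

lemma DMarc.into_A (hAB : Disjoint A B) (h : DMarc G A B M u v) (hv : v ∈ A) :
    u ∈ B ∧ s(u, v) ∈ M :=
  h.2.elim (fun h => absurd h.2.1 (Set.disjoint_left.1 hAB hv)) fun h => ⟨h.1, h.2.2⟩

lemma DMarc.into_B (hAB : Disjoint A B) (h : DMarc G A B M u v) (hv : v ∈ B) :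
    u ∈ A ∧ s(u, v) ∉ M :=
  h.2.elim (fun h => ⟨h.1, h.2.2⟩) fun h => absurd hv (Set.disjoint_left.1 hAB h.2.1)

lemma dMarc_congr (h : s(u, v) ∈ M ↔ s(u, v) ∈ N) : DMarc G A B M u v ↔ DMarc G A B N u v := by
  simp only [DMarc, h]

lemma dMarc_swap : DMarc G B A M = Function.swap (DMarc G A B M) := by
  ext u v
  simp only [DMarc, Function.swap, Sym2.eq_swap (a := u), G.adj_comm u v]
  tauto

lemma exists_walk_of_reflTransGen {r : V → V → Prop} (hr : ∀ u v, r u v → G.Adj u v)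
    (h : Relation.ReflTransGen r u v) : ∃ p : G.Walk u v, ∀ d ∈ p.darts, r d.fst d.snd := by
  induction h with
  | refl => exact ⟨.nil, by simp⟩
  | tail _ hr' ih =>
    obtain ⟨p, hp⟩ := ih
    refine ⟨p.concat (hr _ _ hr'), fun d hd => ?_⟩
    rw [SimpleGraph.Walk.darts_concat, List.concat_eq_append, List.mem_append,
      List.mem_singleton] at hd
    rcases hd with hd | rfl
    exacts [hp d hd, hr']

/-- Exchanging along the first two arcs `a → b → a₁` frees `a₁`; the rest of the path avoids `b`,
so it is still a path of the new digraph. -/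
theorem isInessential_of_isPath [Finite V] (hAB : Disjoint A B) {M : Set (Sym2 V)}
    (hM : IsMaximumMatching G M) {a v : V} (ha : a ∈ A) (haM : a ∉ matVerts M) (hv : v ∈ A)
    (p : G.Walk a v) (hp : p.IsPath) (hD : ∀ d ∈ p.darts, DMarc G A B M d.fst d.snd) : IsInessential G v :=
  match p, hp, hD with
  | .nil, _, _ => ⟨M, hM, haM⟩
  | .cons _ .nil, _, hD =>
    absurd ((hD _ List.mem_cons_self).out_of_A hAB ha).1 (Set.disjoint_left.1 hAB hv)
  | .cons (v := b) hab (.cons (v := a₁) hba₁ q), hp, hD => by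
    have hb : b ∈ B := ((hD _ List.mem_cons_self).out_of_A hAB ha).1
    obtain ⟨ha₁, hba₁M⟩ := (hD ⟨(b, a₁), hba₁⟩ (by simp)).out_of_B hAB hb
    rw [Sym2.eq_swap] at hba₁M
    obtain ⟨hM₁, ha₁M₁⟩ := hM.exchange hab haM hba₁M
    have hbq : b ∉ q.support := ((SimpleGraph.Walk.cons_isPath_iff _ _).1 hp.of_cons).2
    refine isInessential_of_isPath hAB hM₁ ha₁ ha₁M₁ hv q hp.of_cons.of_cons fun d hd => ?_
    have hne : ∀ w ∈ q.support, w ≠ b := fun w hw hwb => hbq (hwb ▸ hw)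
    refine (dMarc_congr (mem_exchange_iff
      (hne _ (q.dart_fst_mem_support_of_mem_darts hd))
      (hne _ (q.dart_snd_mem_support_of_mem_darts hd)))).2 (hD d ?_)
    simp [hd]
termination_by p.length

theorem isInessential_of_mem_vplus [Finite V] (hAB : Disjoint A B) (hM : IsMaximumMatching G M)
    (hv : v ∈ A) (hvM : v ∈ Vplus G A B M) : IsInessential G v := by
  classical
  obtain ⟨a, ha, haM, hav⟩ := hvM
  obtain ⟨p, hp⟩ := exists_walk_of_reflTransGen (fun _ _ h => h.1) hav
  exact isInessential_of_isPath hAB hM ha haM hv p.bypass p.bypass_isPath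
    fun d hd => hp d (p.darts_bypass_subset_darts hd)

/-- If `a` is matched to `b` in `M` and `N` misses `a`, then `N` matches `b` to some `a'`;
trading `a'b` for `ab` in `N` brings `N` closer to `M`, and `a' → b → a` in `D(M)`. -/
theorem mem_vplus_of_notMem_matVerts [Finite V] (hbip : IsBipartition G A B)
    (hM : IsMaximumMatching G M) {N : Set (Sym2 V)} (hN : IsMaximumMatching G N) {a : V}
    (ha : a ∈ A) (haN : a ∉ matVerts N) : a ∈ Vplus G A B M := by
  by_cases haM : a ∉ matVerts M
  · exact ⟨a, ha, haM, .refl⟩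
  obtain ⟨e, heM, hae⟩ := not_not.1 haM
  obtain ⟨b, rfl⟩ := Sym2.mem_iff_exists.1 hae
  have hab : G.Adj a b := G.mem_edgeSet.1 (hM.1.1 heM)
  have hb : b ∈ B := hbip.mem_B_of_adj ha hab
  obtain ⟨f, hfN, hbf⟩ := hN.mem_matVerts_of_adj hab haN
  obtain ⟨a', rfl⟩ := Sym2.mem_iff_exists.1 hbf
  rw [Sym2.eq_swap] at hfN
  have ha'b : G.Adj a' b := G.mem_edgeSet.1 (hN.1.1 hfN)
  have ha' : a' ∈ A := hbip.symm.mem_B_of_adj hb ha'b.symm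
  have hfM : s(a', b) ∉ M := fun h =>
    haN ⟨_, hfN, hM.1.eq_of_mem h heM (Sym2.mem_mk_right a' b) (Sym2.mem_mk_right a b) ▸
      Sym2.mem_mk_left a b⟩
  obtain ⟨hN', ha'N'⟩ := hN.exchange hab haN hfN
  have hcloser : (insert s(a, b) (N \ {s(a', b)}) \ M).ncard < (N \ M).ncard := by
    rw [Set.insert_sdiff_of_mem _ heM, Set.sdiff_sdiff_comm]
    exact Set.ncard_sdiff_singleton_lt_of_mem ⟨hfN, hfM⟩
  obtain ⟨a₀, ha₀, ha₀M, ha₀a'⟩ := mem_vplus_of_notMem_matVerts hbip hM hN' ha' ha'N'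
  refine ⟨a₀, ha₀, ha₀M, (ha₀a'.tail ⟨ha'b, .inl ⟨ha', hb, hfM⟩⟩).tail ⟨hab.symm, .inr ⟨hb, ha, ?_⟩⟩⟩
  rwa [Sym2.eq_swap]
termination_by (N \ M).ncard

theorem mem_vplus_iff_isInessential [Finite V] (hbip : IsBipartition G A B)
    (hM : IsMaximumMatching G M) (hv : v ∈ A) : v ∈ Vplus G A B M ↔ IsInessential G v :=
  ⟨isInessential_of_mem_vplus hbip.1 hM hv,
    fun ⟨_, hN, hvN⟩ => mem_vplus_of_notMem_matVerts hbip hM hN hv hvN⟩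

theorem mem_vplus_iff_of_mem_B (hAB : Disjoint A B) (hM : IsMatchingSet G M) (hv : v ∈ B) :
    v ∈ Vplus G A B M ↔ ∃ a ∈ A, a ∈ Vplus G A B M ∧ G.Adj a v := by
  constructor
  · rintro ⟨a₀, ha₀, ha₀M, ha₀v⟩
    rcases ha₀v.cases_tail with rfl | ⟨c, ha₀c, hcv⟩
    · exact absurd hv (Set.disjoint_left.1 hAB ha₀)
    · exact ⟨c, (hcv.into_B hAB hv).1, ⟨a₀, ha₀, ha₀M, ha₀c⟩, hcv.1⟩
  · rintro ⟨a, ha, ⟨a₀, ha₀, ha₀M, ha₀a⟩, hav⟩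
    by_cases havM : s(a, v) ∈ M
    · -- `a` is matched, so the path to `a` arrives through its partner `v`
      rcases ha₀a.cases_tail with rfl | ⟨c, ha₀c, hca⟩
      · exact absurd ⟨_, havM, Sym2.mem_mk_left a v⟩ ha₀M
      have hcv : s(c, a) = s(a, v) :=
        hM.eq_of_mem (hca.into_A hAB ha).2 havM (Sym2.mem_mk_right c a) (Sym2.mem_mk_left a v)
      obtain rfl : c = v := by
        rcases Sym2.eq_iff.1 hcv with ⟨rfl, rfl⟩ | ⟨rfl, -⟩ <;> rfl
      exact ⟨a₀, ha₀, ha₀M, ha₀c⟩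
    · exact ⟨a₀, ha₀, ha₀M, ha₀a.tail ⟨hav, .inl ⟨ha, hv, havM⟩⟩⟩

theorem vplus_eq_of_isMaximumMatching [Finite V] (hbip : IsBipartition G A B)
    (hM : IsMaximumMatching G M) (hN : IsMaximumMatching G N) :
    Vplus G A B N = Vplus G A B M := by
  ext v
  rcases (hbip.2.1 ▸ Set.mem_univ v : v ∈ A ∪ B) with hv | hv
  · rw [mem_vplus_iff_isInessential hbip hN hv, mem_vplus_iff_isInessential hbip hM hv]
  · rw [mem_vplus_iff_of_mem_B hbip.1 hN.1 hv, mem_vplus_iff_of_mem_B hbip.1 hM.1 hv]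
    refine exists_congr fun a => and_congr_right fun ha => ?_
    rw [mem_vplus_iff_isInessential hbip hN ha, mem_vplus_iff_isInessential hbip hM ha]

lemma vminus_eq_vplus_swap : Vminus G A B M = Vplus G B A M := by
  rw [Vminus, Vplus, dMarc_swap]
  simp only [Relation.reflTransGen_swap]

end

/-- Any two maximum matchings have the same `V⁺` and `V⁻`. -/
theorem stmt9 [Fintype V] (G : SimpleGraph V) (A B : Set V) (hbip : IsBipartition G A B)
    (M M' : Set (Sym2 V)) (hM : IsMaximumMatching G M) (hM' : IsMaximumMatching G M') :
    Vplus G A B M' = Vplus G A B M ∧ Vminus G A B M' = Vminus G A B M := by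
  refine ⟨vplus_eq_of_isMaximumMatching hbip hM hM', ?_⟩
  rw [vminus_eq_vplus_swap, vminus_eq_vplus_swap]
  exact vplus_eq_of_isMaximumMatching hbip.symm hM hM'
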